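/- If 0 ≤ α < β ≤ 1, then there exists δ > 0 such that for every f ∈ X_β, the function w^δ f belongs to X_α. -/

import Mathlib

open MeasureTheory

/-- Points of ℝ^d written as `(x', x_d) ∈ ℝ^{d-1} × ℝ`. -/
abbrev Pt (d : ℕ) := EuclideanSpace ℝ (Fin (d - 1)) × ℝ

/-- The weight `w(x) = max(1, |x'|^d, |x_d + |x'|²|^d)`. -/
noncomputable def wW (d : ℕ) (x : Pt d) : ℝ :=
  max 1 (max (‖x.1‖ ^ d) (|x.2 + ‖x.1‖ ^ 2| ^ d))

/-- The exponent `p_t` with `p_t⁻¹ = (1-t)·d/(d+1)`; equals `∞` when `t = 1`. -/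
noncomputable def pexp (d : ℕ) (t : ℝ) : ENNReal :=
  ENNReal.ofReal ((d : ℝ) + 1) / ENNReal.ofReal ((d : ℝ) * (1 - t))

/-- The norm `‖f‖_{X_t} = (∫ |f|^{p_t} w^{t p_t})^{1/p_t} = ‖f · w^t‖_{L^{p_t}}`. -/
noncomputable def Xnorm (d : ℕ) (t : ℝ) (f : Pt d → ℝ) : ENNReal :=
  eLpNorm (fun x => f x * (wW d x) ^ t) (pexp d t) volume

/-!
Write `w^δ f w^α = (f w^β) · w^(-σ)` with `σ = β - α - δ`. Since `1/p_α = 1/p_β + 1/r` for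
`r = (d+1)/(d(β-α))`, Hölder's inequality reduces the claim to `w^(-σ) ∈ L^r`, i.e. to the
integrability of `w^(-σr)`, and `σr > 1` as soon as `δ < (β-α)/(d+1)`.

The weight `w^(-s)` is integrable for every `s > 1`: `w^(1/d)` dominates both `(1 + |x'|)/2` and
`(1 + |t|)/2` with `t = x_d + |x'|²`, so `w^(-s)` is bounded by a multiple of
`(1 + |x'|)^(-(d-1+ε)) (1 + |t|)^(-(1+ε))`, and the shear `(x', x_d) ↦ (x', t)` preserves Lebesgue
measure.

As `f` is not assumed measurable, Hölder is used in the weak form of a finiteness statement,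
obtained by integrating Young's inequality pointwise.
-/

open scoped ENNReal

lemma Real.rpow_neg_le_mul_rpow_neg {b c v e : ℝ} (hb : 0 < b) (hc : 0 < c) (hbv : b ≤ c * v)
    (he : 0 ≤ e) : v ^ (-e) ≤ c ^ e * b ^ (-e) := by
  have hv : 0 < v := pos_of_mul_pos_right (hb.trans_le hbv) hc.le
  calc v ^ (-e) = c ^ e * (c * v) ^ (-e) := by
        rw [mul_rpow hc.le hv.le, ← mul_assoc, ← rpow_add hc, add_neg_cancel, rpow_zero, one_mul]
    _ ≤ c ^ e * b ^ (-e) :=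
        mul_le_mul_of_nonneg_left (rpow_le_rpow_of_nonpos hb hbv (neg_nonpos.2 he)) (by positivity)

lemma one_add_le_two_mul_rpow_inv_natCast {a W : ℝ} {d : ℕ} (hd : d ≠ 0) (ha : 0 ≤ a)
    (hW : 1 ≤ W) (haW : a ^ d ≤ W) : 1 + a ≤ 2 * W ^ (d⁻¹ : ℝ) := by
  have h₁ : 1 ≤ W ^ (d⁻¹ : ℝ) := Real.one_le_rpow hW (by positivity)
  have h₂ : a ≤ W ^ (d⁻¹ : ℝ) := by
    rw [← Real.pow_rpow_inv_natCast ha hd]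
    gcongr
  linarith

theorem ENNReal.mul_rpow_le_rpow_add_rpow (a b : ℝ≥0∞) {p q r : ℝ} (h : p.HolderTriple q r) :
    (a * b) ^ r ≤ a ^ p + b ^ q := by
  have hr := h.pos'
  have hp : 1 ≤ p / r := (one_lt_div hr).2 h.lt |>.le
  have hq : 1 ≤ q / r := (one_lt_div hr).2 h.symm.lt |>.le
  calc (a * b) ^ r = a ^ r * b ^ r := mul_rpow_of_nonneg _ _ hr.le
    _ ≤ (a ^ r) ^ (p / r) / ENNReal.ofReal (p / r) + (b ^ r) ^ (q / r) / ENNReal.ofReal (q / r) :=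
      young_inequality _ _ h.holderConjugate_div_div
    _ ≤ (a ^ r) ^ (p / r) + (b ^ r) ^ (q / r) := by
      gcongr <;> exact div_le_of_le_mul (le_mul_of_one_le_right bot_le (one_le_ofReal.2 ‹_›))
    _ = a ^ p + b ^ q := by
      rw [← rpow_mul, ← rpow_mul, mul_div_cancel₀ _ hr.ne', mul_div_cancel₀ _ hr.ne']

namespace MeasureTheory

variable {α 𝕜 : Type*} [MeasurableSpace α] {μ : Measure α} [NormedField 𝕜]

theorem eLpNorm_mul_lt_top_of_top_left {p : ℝ≥0∞} {f g : α → 𝕜}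
    (hf : eLpNorm f ∞ μ < ∞) (hg : eLpNorm g p μ < ∞) : eLpNorm (f * g) p μ < ∞ := by
  have hbound : ∀ᵐ x ∂μ, ‖(f * g) x‖ₑ ≤ (eLpNorm f ∞ μ).toNNReal * ‖g x‖ₑ := by
    filter_upwards [enorm_ae_le_eLpNormEssSup f μ] with x hx
    rw [Pi.mul_apply, enorm_mul, ENNReal.coe_toNNReal hf.ne]
    gcongr
    rwa [eLpNorm_exponent_top]
  exact (eLpNorm_le_mul_eLpNorm_of_ae_le_mul' hbound p).trans_lt
    (ENNReal.mul_lt_top ENNReal.coe_lt_top hg)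

theorem eLpNorm_mul_lt_top {p q r : ℝ≥0∞} [hpqr : ENNReal.HolderTriple p q r] {f g : α → 𝕜}
    (hf : eLpNorm f p μ < ∞) (hg : MemLp g q μ) : eLpNorm (f * g) r μ < ∞ := by
  obtain rfl | hp := eq_or_ne p ∞
  · obtain rfl : r = q := ENNReal.HolderTriple.unique ∞ q r q
    exact eLpNorm_mul_lt_top_of_top_left hf hg.2
  obtain rfl | hq := eq_or_ne q ∞
  · obtain rfl : r = p := ENNReal.HolderTriple.unique p ∞ r p
    rw [mul_comm]
    exact eLpNorm_mul_lt_top_of_top_left hg.2 hf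
  obtain rfl | hr := eq_or_ne r 0
  · simp
  have hp₀ : p ≠ 0 := (pos_of_ne_zero hr |>.trans_le hpqr.le).ne'
  have hq₀ : q ≠ 0 := (pos_of_ne_zero hr |>.trans_le (ENNReal.HolderTriple.le q p r)).ne'
  have hr' : r ≠ ∞ := (hpqr.le.trans_lt hp.lt_top).ne
  have hreal : p.toReal.HolderTriple q.toReal r.toReal :=
    ⟨by rw [← ENNReal.toReal_inv, ← ENNReal.toReal_inv, ← ENNReal.toReal_inv, hpqr.inv_eq,
        ENNReal.toReal_add (by simpa) (by simpa)],
      ENNReal.toReal_pos hp₀ hp, ENNReal.toReal_pos hq₀ hq⟩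
  rw [eLpNorm_lt_top_iff_lintegral_rpow_enorm_lt_top hp₀ hp] at hf
  have hg' := (eLpNorm_lt_top_iff_lintegral_rpow_enorm_lt_top hq₀ hq).1 hg.2
  rw [eLpNorm_lt_top_iff_lintegral_rpow_enorm_lt_top hr hr']
  calc ∫⁻ x, ‖(f * g) x‖ₑ ^ r.toReal ∂μ
      ≤ ∫⁻ x, (‖f x‖ₑ ^ p.toReal + ‖g x‖ₑ ^ q.toReal) ∂μ := by
        gcongr with x
        rw [Pi.mul_apply, enorm_mul]
        exact ENNReal.mul_rpow_le_rpow_add_rpow _ _ hreal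
    _ = (∫⁻ x, ‖f x‖ₑ ^ p.toReal ∂μ) + ∫⁻ x, ‖g x‖ₑ ^ q.toReal ∂μ :=
        lintegral_add_right' _ (hg.1.enorm.pow_const _)
    _ < ∞ := ENNReal.add_lt_top.2 ⟨hf, hg'⟩

theorem Integrable.mul_prod_comp_add_right [SFinite μ] {F : α → ℝ} {G : ℝ → ℝ} {φ : α → ℝ}
    (hF : Integrable F μ) (hG : Integrable G) (hφ : Measurable φ) :
    Integrable (fun z : α × ℝ => F z.1 * G (z.2 + φ z.1)) (μ.prod volume) := by
  have hshear : MeasurePreserving (fun z : α × ℝ => (z.1, z.2 + φ z.1))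
      (μ.prod volume) (μ.prod volume) :=
    (MeasurePreserving.id μ).skew_product (by fun_prop)
      (.of_forall fun a => map_add_right_eq_self volume (φ a))
  exact hshear.integrable_comp_of_integrable (hF.mul_prod hG)

end MeasureTheory

section Weight

variable {d : ℕ}

lemma one_le_wW (x : Pt d) : 1 ≤ wW d x := le_max_left _ _

lemma wW_pos (x : Pt d) : 0 < wW d x := one_pos.trans_le (one_le_wW x)

lemma continuous_wW_rpow (d : ℕ) (s : ℝ) : Continuous fun x : Pt d => wW d x ^ s := by
  refine Continuous.rpow_const ?_ fun x => .inl (wW_pos x).ne'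
  unfold wW
  fun_prop

lemma one_add_norm_le_wW (hd : d ≠ 0) (x : Pt d) : 1 + ‖x.1‖ ≤ 2 * wW d x ^ (d⁻¹ : ℝ) :=
  one_add_le_two_mul_rpow_inv_natCast hd (norm_nonneg _) (one_le_wW x)
    ((le_max_left _ _).trans (le_max_right _ _))

lemma one_add_abs_le_wW (hd : d ≠ 0) (x : Pt d) :
    1 + |x.2 + ‖x.1‖ ^ 2| ≤ 2 * wW d x ^ (d⁻¹ : ℝ) :=
  one_add_le_two_mul_rpow_inv_natCast hd (abs_nonneg _) (one_le_wW x)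
    ((le_max_right _ _).trans (le_max_right _ _))

lemma wW_rpow_neg_le (hd : d ≠ 0) {e₁ e₂ : ℝ} (he₁ : 0 ≤ e₁) (he₂ : 0 ≤ e₂) (x : Pt d) :
    wW d x ^ (-((e₁ + e₂) / d)) ≤
      2 ^ (e₁ + e₂) * ((1 + ‖x.1‖) ^ (-e₁) * (1 + ‖x.2 + ‖x.1‖ ^ 2‖) ^ (-e₂)) := by
  set v := wW d x ^ (d⁻¹ : ℝ)
  have hsplit : wW d x ^ (-((e₁ + e₂) / d)) = v ^ (-e₁) * v ^ (-e₂) := by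
    rw [← Real.rpow_add (by positivity [wW_pos x]), ← Real.rpow_mul (wW_pos x).le]
    congr 1
    ring
  rw [hsplit, Real.rpow_add two_pos, mul_mul_mul_comm]
  refine mul_le_mul ?_ ?_ (by positivity [wW_pos x]) (by positivity)
  · exact Real.rpow_neg_le_mul_rpow_neg (by positivity) two_pos (one_add_norm_le_wW hd x) he₁
  · rw [Real.norm_eq_abs]
    exact Real.rpow_neg_le_mul_rpow_neg (by positivity) two_pos (one_add_abs_le_wW hd x) he₂

theorem integrable_wW_rpow_neg (hd : d ≠ 0) {s : ℝ} (hs : 1 < s) :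
    Integrable (fun x : Pt d => wW d x ^ (-s)) := by
  have hd' : (1 : ℝ) ≤ d := Nat.one_le_cast.2 (Nat.pos_of_ne_zero hd)
  set ε := d * (s - 1) / 2
  have hε : 0 < ε := by have := sub_pos.2 hs; positivity
  have h₁ : ((Module.finrank ℝ (EuclideanSpace ℝ (Fin (d - 1))) : ℕ) : ℝ) < d - 1 + ε := by
    rw [finrank_euclideanSpace, Fintype.card_fin, Nat.cast_sub (by omega)]
    push_cast
    linarith
  have h₂ : ((Module.finrank ℝ ℝ : ℕ) : ℝ) < 1 + ε := by
    simp only [Module.finrank_self, Nat.cast_one]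
    linarith
  have hmajor : Integrable (fun x : Pt d => 2 ^ (d * s) *
      ((1 + ‖x.1‖) ^ (-(d - 1 + ε)) * (1 + ‖x.2 + ‖x.1‖ ^ 2‖) ^ (-(1 + ε)))) := by
    rw [Measure.volume_eq_prod]
    exact ((integrable_one_add_norm h₁).mul_prod_comp_add_right (integrable_one_add_norm h₂)
      (by fun_prop : Measurable fun y => ‖y‖ ^ 2)).const_mul _
  refine hmajor.mono' (continuous_wW_rpow d _).aestronglyMeasurable (.of_forall fun x => ?_)
  rw [Real.norm_of_nonneg (Real.rpow_nonneg (wW_pos x).le _)]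
  have hsum : (d - 1 + ε) + (1 + ε) = d * s := by ring
  have hbound := wW_rpow_neg_le hd (e₁ := d - 1 + ε) (e₂ := 1 + ε) (by linarith) (by linarith) x
  rwa [hsum, mul_div_cancel_left₀ _ (Nat.cast_ne_zero.2 hd)] at hbound

theorem memLp_wW_rpow_neg (hd : d ≠ 0) {σ : ℝ} {q : ℝ≥0∞} (h : 1 < σ * q.toReal) :
    MemLp (fun x : Pt d => wW d x ^ (-σ)) q := by
  have hq₀ : q ≠ 0 := by rintro rfl; simp at h; linarith
  have hq : q ≠ ∞ := by rintro rfl; simp at h; linarith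
  refine (integrable_norm_rpow_iff (continuous_wW_rpow d _).aestronglyMeasurable hq₀ hq).1 ?_
  refine (integrable_wW_rpow_neg hd h).congr (.of_forall fun x => ?_)
  dsimp only
  rw [Real.norm_of_nonneg (Real.rpow_nonneg (wW_pos x).le _), ← Real.rpow_mul (wW_pos x).le,
    neg_mul]

end Weight

lemma inv_pexp (d : ℕ) (t : ℝ) : (pexp d t)⁻¹ = ENNReal.ofReal (d * (1 - t) / (d + 1)) := by
  rw [pexp, ENNReal.inv_div (.inr ENNReal.ofReal_ne_top)
    (.inr (ENNReal.ofReal_pos.2 (by positivity)).ne'), ENNReal.ofReal_div_of_pos (by positivity)]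

lemma holderTriple_pexp (d : ℕ) {α β : ℝ} (hαβ : α ≤ β) (hβ : β ≤ 1) :
    ENNReal.HolderTriple (pexp d β) (ENNReal.ofReal (d * (β - α) / (d + 1)))⁻¹ (pexp d α) where
  inv_add_inv_eq_inv := by
    rw [inv_inv, inv_pexp, inv_pexp, ← ENNReal.ofReal_add
      (div_nonneg (mul_nonneg d.cast_nonneg (sub_nonneg.2 hβ)) (by positivity))
      (div_nonneg (mul_nonneg d.cast_nonneg (sub_nonneg.2 hαβ)) (by positivity))]
    congr 1
    ring

theorem Xnorm_gain_weight_general (d : ℕ) (hd : 2 ≤ d) (α β : ℝ)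
    (hαβ : α < β) (hβ : β ≤ 1) :
    ∃ δ : ℝ, 0 < δ ∧ ∀ f : Pt d → ℝ, Xnorm d β f < ⊤ →
      Xnorm d α (fun x => (wW d x) ^ δ * f x) < ⊤ := by
  have hd₀ : d ≠ 0 := by omega
  have hβα : 0 < β - α := sub_pos.2 hαβ
  set δ := (β - α) / (2 * (d + 1))
  refine ⟨δ, by positivity, fun f hf => ?_⟩
  set q := (ENNReal.ofReal (d * (β - α) / (d + 1)))⁻¹
  have := holderTriple_pexp d hαβ.le hβ
  have hσq : 1 < (β - α - δ) * q.toReal := by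
    rw [ENNReal.toReal_inv, ENNReal.toReal_ofReal (by positivity), lt_mul_inv_iff₀ (by positivity)]
    simp only [δ]
    field_simp
    nlinarith
  have hprod := eLpNorm_mul_lt_top (r := pexp d α) hf (memLp_wW_rpow_neg hd₀ hσq)
  unfold Xnorm
  convert hprod using 2
  ext x
  have hexp : wW d x ^ β * wW d x ^ (-(β - α - δ)) = wW d x ^ δ * wW d x ^ α := by
    rw [← Real.rpow_add (wW_pos x), ← Real.rpow_add (wW_pos x)]
    congr 1
    ring
  rw [Pi.mul_apply, mul_assoc (f x), hexp]
  ring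

/-- If `0 ≤ α < β ≤ 1`, there is `δ > 0` such that `w^δ f ∈ X_α` for every `f ∈ X_β`. -/
theorem Xnorm_gain_weight (d : ℕ) (hd : 2 ≤ d) (α β : ℝ)
    (hα : 0 ≤ α) (hαβ : α < β) (hβ : β ≤ 1) :
    ∃ δ : ℝ, 0 < δ ∧ ∀ f : Pt d → ℝ, Xnorm d β f < ⊤ →
      Xnorm d α (fun x => (wW d x) ^ δ * f x) < ⊤ :=
  Xnorm_gain_weight_general d hd α β hαβ hβ
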